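/- arXiv:1903.02743 — 2 statements merged into one kernel-verified Lean document; each statement's English description precedes it below -/
import Mathlib

section
/- Let u, u' ∈ L²(ℝ) ∩ L∞(ℝ) with u' locally absolutely continuous and -h²u''+Vu ∈ L²(ℝ) for V ∈ L¹(ℝ). Let w : ℝ → [-1,1] with w' ∈ L¹(ℝ). If F(x) = |h u'(x)|² + E|u(x)|², then wF and (wF)' are both in L¹(ℝ), and consequently ∫_ℝ (wF)'(x) dx = 0. -/
/-!
With `F = h²‖u'‖² + E‖u‖²` and `F' = 2h² Re(u'' ū') + 2E Re(u ū')`: `F ∈ L¹ ∩ L∞` since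
`u, u' ∈ L² ∩ L∞`, and `F' ∈ L¹` by Cauchy–Schwarz once `h²u''` is rewritten as
`Vu - (-h²u'' + Vu)` (the `V u ū'` part is integrable because `V ∈ L¹` and `u ū'` is bounded).
So `wF` and `(wF)' = w'F + wF'` are integrable. Since `w` and `F` are absolutely continuous, `wF`
is the primitive of `(wF)'`; it therefore has limits at `±∞`, which vanish because `wF ∈ L¹`, and
`∫ (wF)' = 0`.
-/

open MeasureTheory Complex Set Filter ComplexConjugate

theorem Real.volume_eq_top_of_mem_atTop {s : Set ℝ} (hs : s ∈ (atTop : Filter ℝ)) :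
    volume s = ⊤ := by
  obtain ⟨b, hb⟩ := mem_atTop_sets.1 hs
  exact top_le_iff.1 (Real.volume_Ici (a := b) ▸ measure_mono fun x hx => hb x hx)

theorem Real.volume_eq_top_of_mem_atBot {s : Set ℝ} (hs : s ∈ (atBot : Filter ℝ)) :
    volume s = ⊤ := by
  obtain ⟨b, hb⟩ := mem_atBot_sets.1 hs
  exact top_le_iff.1 (Real.volume_Iic (a := b) ▸ measure_mono fun x hx => hb x hx)

theorem integral_eq_zero_of_eq_primitive {E : Type*} [NormedAddCommGroup E] [NormedSpace ℝ E]
    [CompleteSpace E] {f f' : ℝ → E} (hf : Integrable f) (hf' : Integrable f')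
    (hprim : ∀ x, f x = f 0 + ∫ t in (0 : ℝ)..x, f' t) :
    ∫ x, f' x = 0 := by
  have htop : f 0 + ∫ t in Ioi 0, f' t = 0 :=
    (hf.integrableAtFilter atTop).eq_zero_of_tendsto
      (fun _ => Real.volume_eq_top_of_mem_atTop) <|
      (tendsto_const_nhds.add (intervalIntegral_tendsto_integral_Ioi 0 hf'.integrableOn
        tendsto_id)).congr fun x => (hprim x).symm
  have hbot : f 0 - ∫ t in Iic 0, f' t = 0 := by
    refine (hf.integrableAtFilter atBot).eq_zero_of_tendsto
      (fun _ => Real.volume_eq_top_of_mem_atBot) <|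
      (tendsto_const_nhds.sub (intervalIntegral_tendsto_integral_Iic 0 hf'.integrableOn
        tendsto_id)).congr fun x => ?_
    rw [hprim x, intervalIntegral.integral_symm, sub_neg_eq_add]; rfl
  calc ∫ x, f' x = (f 0 + ∫ t in Ioi 0, f' t) - (f 0 - ∫ t in Iic 0, f' t) := by
        rw [← intervalIntegral.integral_Iic_add_Ioi hf'.integrableOn hf'.integrableOn]; abel
    _ = 0 := by rw [htop, hbot, sub_zero]

theorem continuous_of_eq_primitive {E : Type*} [NormedAddCommGroup E] [NormedSpace ℝ E]
    [CompleteSpace E] {f f' : ℝ → E} (hf' : ∀ a b : ℝ, IntervalIntegrable f' volume a b)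
    (hf : ∀ x, f x = f 0 + ∫ t in (0:ℝ)..x, f' t) : Continuous f := by
  rw [funext hf]
  exact continuous_const.add (intervalIntegral.continuous_primitive hf' 0)

section AbsolutelyContinuous

variable {a b : ℝ}

theorem AbsolutelyContinuousOnInterval.integral_eq_sub_of_ae_hasDerivAt {f f' : ℝ → ℝ}
    (hf : AbsolutelyContinuousOnInterval f a b)
    (hderiv : ∀ᵐ x, x ∈ uIcc a b → HasDerivAt f (f' x) x) :
    ∫ x in a..b, f' x = f b - f a := by
  rw [← hf.integral_deriv_eq_sub]
  refine intervalIntegral.integral_congr_ae ?_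
  filter_upwards [hderiv] with x hx hx'
  exact (hx (uIoc_subset_uIcc hx')).deriv.symm

theorem ae_hasDerivAt_of_eq_primitive {E : Type*} [NormedAddCommGroup E] [NormedSpace ℝ E]
    [CompleteSpace E] {f f' : ℝ → E} (hf' : IntervalIntegrable f' volume a b)
    (hf : ∀ x, f x = f a + ∫ t in a..x, f' t) :
    ∀ᵐ x, x ∈ uIcc a b → HasDerivAt f (f' x) x := by
  filter_upwards [hf'.ae_hasDerivAt_integral] with x hx hxab
  rw [funext hf]
  exact (hx hxab a left_mem_uIcc).const_add _

theorem absolutelyContinuousOnInterval_of_eq_primitive {f f' : ℝ → ℝ}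
    (hf' : IntervalIntegrable f' volume a b) (hf : ∀ x, f x = f a + ∫ t in a..x, f' t) :
    AbsolutelyContinuousOnInterval f a b := by
  rw [funext hf]
  exact (LipschitzOnWith.absolutelyContinuousOnInterval (K := 0) (by simp)).add
    (hf'.absolutelyContinuousOnInterval_intervalIntegral left_mem_uIcc)

theorem mul_eq_primitive {f f' g g' : ℝ → ℝ}
    (hf' : IntervalIntegrable f' volume a b) (hg' : IntervalIntegrable g' volume a b)
    (hf : ∀ x, f x = f a + ∫ t in a..x, f' t) (hg : ∀ x, g x = g a + ∫ t in a..x, g' t) :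
    f b * g b = f a * g a + ∫ t in a..b, f' t * g t + f t * g' t := by
  rw [((absolutelyContinuousOnInterval_of_eq_primitive hf' hf).fun_mul
      (absolutelyContinuousOnInterval_of_eq_primitive hg' hg)).integral_eq_sub_of_ae_hasDerivAt]
  · ring
  filter_upwards [ae_hasDerivAt_of_eq_primitive hf' hf, ae_hasDerivAt_of_eq_primitive hg' hg]
    with x hfx hgx hx
  exact (hfx hx).mul (hgx hx)

theorem norm_sq_eq_primitive {v v' : ℝ → ℂ} (hv' : ∀ x y, IntervalIntegrable v' volume x y)
    (hv : ∀ x, v x = v a + ∫ t in a..x, v' t) :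
    ‖v b‖ ^ 2 = ‖v a‖ ^ 2 + ∫ t in a..b, 2 * (v' t * conj (v t)).re := by
  have hL (L : ℂ →L[ℝ] ℝ) : AbsolutelyContinuousOnInterval (fun x => L (v x)) a b :=
    absolutelyContinuousOnInterval_of_eq_primitive (f' := fun x => L (v' x))
      ⟨L.integrable_comp (hv' a b).1, L.integrable_comp (hv' a b).2⟩ fun x => by
        rw [hv x, map_add, L.intervalIntegral_comp_comm (hv' a x)]
  have hnorm : (fun x => ‖v x‖ ^ 2) = fun x =>
      reCLM (v x) * reCLM (v x) + imCLM (v x) * imCLM (v x) := by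
    ext x; simp [Complex.sq_norm, Complex.normSq_apply]
  have hac : AbsolutelyContinuousOnInterval (fun x => ‖v x‖ ^ 2) a b := by
    rw [hnorm]; exact ((hL reCLM).fun_mul (hL reCLM)).add ((hL imCLM).fun_mul (hL imCLM))
  rw [hac.integral_eq_sub_of_ae_hasDerivAt]
  · ring
  filter_upwards [ae_hasDerivAt_of_eq_primitive (hv' a b) hv] with x hx hxab
  simpa [Complex.inner] using (hx hxab).norm_sq

end AbsolutelyContinuous

section Integrability

variable {α : Type*} [MeasurableSpace α] {μ : Measure α}

theorem MeasureTheory.MemLp.norm_sq_of_top {E : Type*} [NormedAddCommGroup E] {f : α → E}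
    (hf : MemLp f ⊤ μ) : MemLp (fun x => ‖f x‖ ^ 2) ⊤ μ := by
  convert hf.norm.mul (r := ⊤) hf.norm using 1
  ext; simp [sq]

theorem MeasureTheory.MemLp.integrable_re_mul_conj {f g : α → ℂ} (hf : MemLp f 2 μ)
    (hg : MemLp g 2 μ) : Integrable (fun x => (f x * conj (g x)).re) μ :=
  (hf.integrable_mul hg.star).re

theorem integrable_sq_mul_re_mul_conj {V : α → ℝ} (hV : Integrable V μ) (h : ℝ)
    {u u' u'' : α → ℂ} (hu : MemLp u ⊤ μ) (hu' : MemLp u' 2 μ) (hu'_top : MemLp u' ⊤ μ)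
    (hPu : MemLp (fun x => -(h : ℂ) ^ 2 * u'' x + (V x : ℂ) * u x) 2 μ) :
    Integrable (fun x => h ^ 2 * (u'' x * conj (u' x)).re) μ := by
  have hVu : Integrable (fun x => (V x : ℂ) * (u x * conj (u' x))) μ :=
    hV.ofReal.mul_of_top_left (hu'_top.star.mul hu)
  refine ((hVu.sub (hPu.integrable_mul hu'.star)).re).congr (ae_of_all _ fun x => ?_)
  simp only [Pi.sub_apply, Pi.mul_apply, Pi.star_apply, star_def, RCLike.re_to_complex,
    ← Complex.re_ofReal_mul]
  congr 1
  push_cast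
  ring

end Integrability

theorem energy_eq_primitive (h E : ℝ) {u u' u'' : ℝ → ℂ} (hu : ∀ x, HasDerivAt u (u' x) x)
    (hu'' : ∀ a b : ℝ, IntervalIntegrable u'' volume a b)
    (hAC : ∀ x, u' x = u' 0 + ∫ t in (0:ℝ)..x, u'' t) (x : ℝ) :
    h ^ 2 * ‖u' x‖ ^ 2 + E * ‖u x‖ ^ 2 = h ^ 2 * ‖u' 0‖ ^ 2 + E * ‖u 0‖ ^ 2 +
      ∫ t in (0:ℝ)..x, 2 * h ^ 2 * (u'' t * conj (u' t)).re
        + 2 * E * (u t * conj (u' t)).re := by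
  have hu'c : Continuous u' := continuous_of_eq_primitive hu'' hAC
  have hu'i : ∀ a b : ℝ, IntervalIntegrable u' volume a b := hu'c.intervalIntegrable
  have huprim (y : ℝ) : u y = u 0 + ∫ t in (0:ℝ)..y, u' t := by
    rw [intervalIntegral.integral_eq_sub_of_hasDerivAt (fun t _ => hu t) (hu'i 0 y),
      add_sub_cancel]
  have hkin : IntervalIntegrable (fun t => 2 * (u'' t * conj (u' t)).re) volume 0 x := by
    have := (hu'' 0 x).mul_continuousOn (continuous_star.comp hu'c).continuousOn
    exact IntervalIntegrable.const_mul ⟨this.1.re, this.2.re⟩ 2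
  have hpot : Continuous fun t => 2 * (u' t * conj (u t)).re := by
    have : Continuous u := continuous_iff_continuousAt.2 fun x => (hu x).continuousAt
    fun_prop
  calc h ^ 2 * ‖u' x‖ ^ 2 + E * ‖u x‖ ^ 2
      = h ^ 2 * (‖u' 0‖ ^ 2 + ∫ t in (0:ℝ)..x, 2 * (u'' t * conj (u' t)).re)
        + E * (‖u 0‖ ^ 2 + ∫ t in (0:ℝ)..x, 2 * (u' t * conj (u t)).re) := by
        rw [← norm_sq_eq_primitive hu'' hAC, ← norm_sq_eq_primitive hu'i huprim]
    _ = h ^ 2 * ‖u' 0‖ ^ 2 + E * ‖u 0‖ ^ 2 + ∫ t in (0:ℝ)..x,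
          h ^ 2 * (2 * (u'' t * conj (u' t)).re) + E * (2 * (u' t * conj (u t)).re) := by
        rw [intervalIntegral.integral_add (hkin.const_mul _)
          ((hpot.intervalIntegrable 0 x).const_mul _)]
        simp only [intervalIntegral.integral_const_mul]
        ring
    _ = _ := by
        congr 1
        refine intervalIntegral.integral_congr fun t _ => ?_
        rw [← Complex.inner (u t), real_inner_comm, Complex.inner]
        ring

theorem stmt_5_general (V : ℝ → ℝ) (hV : Integrable V volume) (h E : ℝ)
    (u u' u'' : ℝ → ℂ)
    (hu : ∀ x, HasDerivAt u (u' x) x)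
    (hu'' : ∀ a b : ℝ, IntervalIntegrable u'' volume a b)
    (hAC : ∀ x, u' x = u' 0 + ∫ t in (0:ℝ)..x, u'' t)
    (huL2 : MemLp u 2 volume) (huLinf : MemLp u ⊤ volume)
    (hu'L2 : MemLp u' 2 volume) (hu'Linf : MemLp u' ⊤ volume)
    (hPu : MemLp (fun x => -(h : ℂ) ^ 2 * u'' x + (V x : ℂ) * u x) 2 volume)
    (w w' : ℝ → ℝ) (hw : ∀ x, w x ∈ Set.Icc (-1 : ℝ) 1)
    (hw' : Integrable w' volume)
    (hwAC : ∀ x, w x = w 0 + ∫ t in (0:ℝ)..x, w' t) :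
    Integrable (fun x => w x * (h ^ 2 * ‖u' x‖ ^ 2 + E * ‖u x‖ ^ 2)) volume ∧
    Integrable (fun x => w' x * (h ^ 2 * ‖u' x‖ ^ 2 + E * ‖u x‖ ^ 2)
        + w x * (2 * h ^ 2 * (u'' x * (starRingEnd ℂ) (u' x)).re
          + 2 * E * (u x * (starRingEnd ℂ) (u' x)).re)) volume ∧
    (∫ x, (w' x * (h ^ 2 * ‖u' x‖ ^ 2 + E * ‖u x‖ ^ 2)
        + w x * (2 * h ^ 2 * (u'' x * (starRingEnd ℂ) (u' x)).re
          + 2 * E * (u x * (starRingEnd ℂ) (u' x)).re))) = 0 := by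
  set F := fun x => h ^ 2 * ‖u' x‖ ^ 2 + E * ‖u x‖ ^ 2
  set F' := fun x => 2 * h ^ 2 * (u'' x * conj (u' x)).re + 2 * E * (u x * conj (u' x)).re
  have hw'i : ∀ a b : ℝ, IntervalIntegrable w' volume a b := fun _ _ => hw'.intervalIntegrable
  have hwm : AEStronglyMeasurable w volume :=
    (continuous_of_eq_primitive hw'i hwAC).aestronglyMeasurable
  have hwle : ∀ᵐ x ∂volume, ‖w x‖ ≤ 1 := ae_of_all _ fun x => abs_le.2 (hw x)
  have hF : Integrable F :=
    ((hu'L2.integrable_norm_pow two_ne_zero).const_mul _).add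
      ((huL2.integrable_norm_pow two_ne_zero).const_mul _)
  have hFtop : MemLp F ⊤ volume :=
    (hu'Linf.norm_sq_of_top.const_mul _).add (huLinf.norm_sq_of_top.const_mul _)
  have hF' : Integrable F' := by
    refine ((integrable_sq_mul_re_mul_conj hV h huLinf hu'L2 hu'Linf hPu).const_mul 2).add
      ((huL2.integrable_re_mul_conj hu'L2).const_mul (2 * E)) |>.congr (ae_of_all _ fun x => ?_)
    simp only [F', Pi.add_apply]; ring
  have hwF : Integrable (fun x => w x * F x) := hF.bdd_mul hwm hwle
  have hwF' : Integrable (fun x => w' x * F x + w x * F' x) :=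
    (hw'.mul_of_top_left hFtop).add (hF'.bdd_mul hwm hwle)
  refine ⟨hwF, hwF', integral_eq_zero_of_eq_primitive hwF hwF' fun x => ?_⟩
  exact mul_eq_primitive (hw'i 0 x) hF'.intervalIntegrable hwAC
    (energy_eq_primitive h E hu hu'' hAC)

/-- If `u, u' ∈ L² ∩ L∞`, `u'` is locally absolutely continuous with
`-h²u'' + Vu ∈ L²` for `V ∈ L¹`, and `w : ℝ → [-1,1]` has `w' ∈ L¹`, then
`wF` and `(wF)'` are in `L¹`, and `∫ (wF)' = 0`, where
`F(x) = |hu'(x)|² + E|u(x)|²` and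
`(wF)' = w' F + w (2h² Re(u'' ū') + 2E Re(u ū'))`. -/
theorem stmt_5 (V : ℝ → ℝ) (hV : Integrable V volume) (h E : ℝ)
    (hh : 0 < h) (hE : 0 < E) (u u' u'' : ℝ → ℂ)
    (hu : ∀ x, HasDerivAt u (u' x) x)
    (hu'' : ∀ a b : ℝ, IntervalIntegrable u'' volume a b)
    (hAC : ∀ x, u' x = u' 0 + ∫ t in (0:ℝ)..x, u'' t)
    (huL2 : MemLp u 2 volume) (huLinf : MemLp u ⊤ volume)
    (hu'L2 : MemLp u' 2 volume) (hu'Linf : MemLp u' ⊤ volume)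
    (hPu : MemLp (fun x => -(h : ℂ) ^ 2 * u'' x + (V x : ℂ) * u x) 2 volume)
    (w w' : ℝ → ℝ) (hw : ∀ x, w x ∈ Set.Icc (-1 : ℝ) 1)
    (hw' : Integrable w' volume)
    (hwAC : ∀ x, w x = w 0 + ∫ t in (0:ℝ)..x, w' t) :
    Integrable (fun x => w x * (h ^ 2 * ‖u' x‖ ^ 2 + E * ‖u x‖ ^ 2)) volume ∧
    Integrable (fun x => w' x * (h ^ 2 * ‖u' x‖ ^ 2 + E * ‖u x‖ ^ 2)
        + w x * (2 * h ^ 2 * (u'' x * (starRingEnd ℂ) (u' x)).re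
          + 2 * E * (u x * (starRingEnd ℂ) (u' x)).re)) volume ∧
    (∫ x, (w' x * (h ^ 2 * ‖u' x‖ ^ 2 + E * ‖u x‖ ^ 2)
        + w x * (2 * h ^ 2 * (u'' x * (starRingEnd ℂ) (u' x)).re
          + 2 * E * (u x * (starRingEnd ℂ) (u' x)).re))) = 0 :=
  stmt_5_general V hV h E u u' u'' hu hu'' hAC huL2 huLinf hu'L2 hu'Linf hPu w w' hw hw' hwAC
end

section
/- Let m ∈ L¹(ℝ) be nonnegative, k, h > 0, and choose a ∈ ℝ with ∫_a^∞ m = ∫_{-∞}^a m. Define w(x) = 2 exp( -(k/(2h)) ∫_ℝ m ) sinh( (k/h) ∫_a^x m ). Then |w(x)| ≤ 1 for all x, and w'(x) ≥ (2k/h) exp( -(k/(2h)) ∫_ℝ m ) m(x) for a.e. x. -/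
/-!
Since `a` is a median of `m ≥ 0`, the primitive `∫_a^x m` stays within `±(∫ m)/2`, so
`|w x| ≤ 2 e^{-c} sinh c = 1 - e^{-2c} ≤ 1` with `c = (k/2h) ∫ m`. By the Lebesgue
differentiation theorem `w` is differentiable a.e. with
`w' = 2 e^{-c} cosh((k/h)∫_a^x m) (k/h) m`, and `cosh ≥ 1`.
-/

open MeasureTheory Set Real

section MedianBound

variable {m : ℝ → ℝ} {a x : ℝ}

lemma integral_Ioi_eq_half_integral_of_median (hm : Integrable m)
    (ha : ∫ t in Ioi a, m t = ∫ t in Iio a, m t) :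
    ∫ t in Ioi a, m t = (∫ t, m t) / 2 := by
  have hsplit :=
    intervalIntegral.integral_Iic_add_Ioi (b := a) hm.integrableOn hm.integrableOn
  rw [integral_Iic_eq_integral_Iio, ← ha] at hsplit
  linarith

lemma intervalIntegral_le_integral_Ioi (hm : Integrable m) (hm0 : ∀ t, 0 ≤ m t)
    (hax : a ≤ x) :
    ∫ t in a..x, m t ≤ ∫ t in Ioi a, m t := by
  rw [intervalIntegral.integral_of_le hax]
  exact setIntegral_mono_set hm.integrableOn (.of_forall hm0) Ioc_subset_Ioi_self.eventuallyLE

lemma intervalIntegral_le_integral_Iio (hm : Integrable m) (hm0 : ∀ t, 0 ≤ m t)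
    (hxa : x ≤ a) :
    ∫ t in x..a, m t ≤ ∫ t in Iio a, m t := by
  rw [intervalIntegral.integral_of_le hxa, ← integral_Iic_eq_integral_Iio]
  exact setIntegral_mono_set hm.integrableOn (.of_forall hm0) Ioc_subset_Iic_self.eventuallyLE

lemma abs_intervalIntegral_le_half_integral_of_median (hm : Integrable m) (hm0 : ∀ t, 0 ≤ m t)
    (ha : ∫ t in Ioi a, m t = ∫ t in Iio a, m t) (x : ℝ) :
    |∫ t in a..x, m t| ≤ (∫ t, m t) / 2 := by
  have hIoi := integral_Ioi_eq_half_integral_of_median hm ha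
  rcases le_total a x with hax | hxa
  · rw [abs_of_nonneg (intervalIntegral.integral_nonneg hax fun t _ ↦ hm0 t), ← hIoi]
    exact intervalIntegral_le_integral_Ioi hm hm0 hax
  · rw [intervalIntegral.integral_symm, abs_neg,
      abs_of_nonneg (intervalIntegral.integral_nonneg hxa fun t _ ↦ hm0 t), ← hIoi, ha]
    exact intervalIntegral_le_integral_Iio hm hm0 hxa

end MedianBound

lemma two_mul_exp_neg_mul_abs_sinh_le_one {u c : ℝ} (hu : |u| ≤ c) :
    2 * exp (-c) * |sinh u| ≤ 1 := by
  have hexp : exp (-c) * exp c = 1 := by rw [← exp_add, neg_add_cancel, exp_zero]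
  calc 2 * exp (-c) * |sinh u| ≤ 2 * exp (-c) * sinh c := by
        rw [abs_sinh]
        exact mul_le_mul_of_nonneg_left (sinh_le_sinh.2 hu) (by positivity)
    _ = 1 - exp (-c) ^ 2 := by rw [sinh_eq, ← hexp]; ring
    _ ≤ 1 := sub_le_self _ (sq_nonneg _)

lemma mul_le_deriv_const_mul_sinh_comp {F : ℝ → ℝ} {f' x : ℝ} (hF : HasDerivAt F f' x)
    {C κ : ℝ} (hC : 0 ≤ C) (hκ : 0 ≤ κ) (hf' : 0 ≤ f') :
    C * κ * f' ≤ deriv (fun y ↦ C * sinh (κ * F y)) x := by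
  rw [((hF.const_mul κ).sinh.const_mul C).deriv, mul_assoc C κ]
  exact mul_le_mul_of_nonneg_left (le_mul_of_one_le_left (by positivity) (one_le_cosh _)) hC

/-- Properties of the weight
`w(x) = 2 exp(-(k/2h)∫m) sinh((k/h)∫_a^x m)`: `|w| ≤ 1` and
`w'(x) ≥ (2k/h) exp(-(k/2h)∫m) m(x)` a.e. -/
theorem stmt_9 (m : ℝ → ℝ) (hm : Integrable m volume) (hm0 : ∀ x, 0 ≤ m x)
    (k h : ℝ) (hk : 0 < k) (hh : 0 < h) (a : ℝ)
    (ha : (∫ x in Set.Ioi a, m x) = ∫ x in Set.Iio a, m x)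
    (w : ℝ → ℝ)
    (hw : ∀ x, w x = 2 * Real.exp (-(k / (2 * h)) * ∫ y, m y) *
        Real.sinh (k / h * ∫ t in a..x, m t)) :
    (∀ x, |w x| ≤ 1) ∧
    (∀ᵐ x ∂volume,
      2 * k / h * Real.exp (-(k / (2 * h)) * ∫ y, m y) * m x ≤ deriv w x) := by
  have hkh : 0 < k / h := div_pos hk hh
  have hexponent : -(k / (2 * h)) * ∫ y, m y = -(k / h * ((∫ y, m y) / 2)) := by ring
  refine ⟨fun x ↦ ?_, ?_⟩
  · rw [hw x, abs_mul, abs_of_pos (by positivity), hexponent]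
    apply two_mul_exp_neg_mul_abs_sinh_le_one
    rw [abs_mul, abs_of_pos hkh]
    exact mul_le_mul_of_nonneg_left
      (abs_intervalIntegral_le_half_integral_of_median hm hm0 ha x) hkh.le
  · filter_upwards [LocallyIntegrable.ae_hasDerivAt_integral hm.locallyIntegrable] with x hx
    rw [funext hw]
    calc 2 * k / h * exp (-(k / (2 * h)) * ∫ y, m y) * m x
        = 2 * exp (-(k / (2 * h)) * ∫ y, m y) * (k / h) * m x := by ring
      _ ≤ _ := mul_le_deriv_const_mul_sinh_comp (hx a) (by positivity) hkh.le (hm0 x)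
end
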